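/- arXiv:2507.07292 — 4 statements merged into one kernel-verified Lean document; each statement's English description precedes it below -/
import Mathlib

section
/- Let X be a real Banach space, let Ω_U ⊆ X be compact, let U ⊆ C(Ω_U, ℝ) be a compact subset of the Banach space of continuous real-valued functions on Ω_U with the supremum norm, let Ω_V ⊆ ℝ^{d_V} be compact, and let G : U → C(Ω_V, ℝ) be continuous. Let σ : ℝ → ℝ be a Tauber–Wiener function. Then for every ε > 0 there exist natural numbers m, n, s, p, points x_1, …, x_m ∈ Ω_U, real numbers c_{k,i}, θ_{k,i}, ξ_{k,i,j} (for 1 ≤ k ≤ p, 1 ≤ i ≤ n, 1 ≤ j ≤ m), and real numbers a_{k,l}, ζ_{k,l} and vectors ω_{k,l} ∈ ℝ^{d_V} (for 1 ≤ k ≤ p, 1 ≤ l ≤ s), such that for all u ∈ U and all y ∈ Ω_V, | G(u)(y) − Σ_{k=1}^{p} ( Σ_{i=1}^{n} c_{k,i} σ( Σ_{j=1}^{m} ξ_{k,i,j} u(x_j) + θ_{k,i} ) ) · ( Σ_{l=1}^{s} a_{k,l} σ( ω_{k,l} · y + ζ_{k,l} ) ) | < ε. -/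
/-!
By Stone–Weierstrass on the compact space `U × Ω_V`, `(u, y) ↦ G u y` is uniformly close to a
finite sum `∑ₖ rₖ exp (Lₖ u + ⟪ωₖ, y⟫)`, where each `Lₖ u = ∑ⱼ ξₖⱼ u(xⱼ)` evaluates `u` at finitely
many points: these exponentials separate points and are closed under products, so their span is a
point-separating subalgebra. Each term factors as `(rₖ exp (Lₖ u)) · exp ⟪ωₖ, y⟫`, and the two
factors are functions of the bounded scalars `Lₖ u` and `⟪ωₖ, y⟫`, so the Tauber–Wiener property
approximates each one by a one-layer `σ`-network of that scalar. Multiplication is uniformly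
continuous on bounded sets, which controls the error of the product.
-/

open Real InnerProductSpace

/-- A function `σ : ℝ → ℝ` is a Tauber–Wiener function if on every interval `[a, b]`,
every continuous function can be uniformly approximated to arbitrary accuracy by
linear combinations `x ↦ ∑ i, c i * σ (w i * x + θ i)`. -/
def TauberWiener (σ : ℝ → ℝ) : Prop :=
  ∀ (a b : ℝ) (f : C(Set.Icc a b, ℝ)) (ε : ℝ), 0 < ε →
    ∃ (n : ℕ) (c w θ : Fin n → ℝ),
      ∀ x : Set.Icc a b, |f x - ∑ i, c i * σ (w i * (x : ℝ) + θ i)| < ε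

lemma exists_pos_abs_mul_sub_mul_lt (α β : ℝ) {ε : ℝ} (hε : 0 < ε) :
    ∃ δ > 0, ∀ a b a' b' : ℝ, |a| ≤ α → |b| ≤ β → |a - a'| < δ → |b - b'| < δ →
      |a * b - a' * b'| < ε := by
  set C := |α| + |β| + 1
  have hC : 0 < C := by positivity
  refine ⟨min 1 (ε / (2 * C)), by positivity, fun a b a' b' ha hb haa hbb => ?_⟩
  set δ := min 1 (ε / (2 * C))
  have hδC : δ * C ≤ ε / 2 := calc
    δ * C ≤ ε / (2 * C) * C := by gcongr; exact min_le_right _ _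
    _ = ε / 2 := by field_simp
  have ha' : |a'| ≤ |α| + 1 := by
    have := abs_sub_abs_le_abs_sub a' a
    rw [abs_sub_comm] at this
    linarith [le_abs_self α, min_le_left 1 (ε / (2 * C))]
  calc |a * b - a' * b'| = |(a - a') * b + a' * (b - b')| := by congr 1; ring
    _ ≤ |a - a'| * |b| + |a'| * |b - b'| := by
        rw [← abs_mul, ← abs_mul]; exact abs_add_le _ _
    _ ≤ δ * |β| + (|α| + 1) * δ := by
        exact add_le_add (mul_le_mul haa.le (hb.trans (le_abs_self β)) (abs_nonneg _)
          (by positivity)) (mul_le_mul ha' hbb.le (abs_nonneg _) (by positivity))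
    _ = δ * C := by ring
    _ < ε := by linarith

lemma Finsupp.exists_fin_forall_linearCombination_eq {ι α R M : Type*} [Fintype ι] [Semiring R]
    [AddCommMonoid M] [Module R M] (f : ι → α →₀ R) :
    ∃ (m : ℕ) (x : Fin m → α), ∀ k (v : α → M),
      linearCombination R v (f k) = ∑ j, f k (x j) • v (x j) := by
  classical
  set S := Finset.univ.biUnion fun k => (f k).support
  refine ⟨S.card, fun j => S.equivFin.symm j, fun k v => ?_⟩
  rw [linearCombination_apply, Finsupp.sum_of_support_subset (f k)
    (Finset.subset_biUnion_of_mem (fun k => (f k).support) (Finset.mem_univ k)) _ (by simp),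
    ← S.sum_coe_sort, ← S.equivFin.symm.sum_comp]

noncomputable def ContinuousMap.expHom {Z M : Type*} [TopologicalSpace Z] [AddMonoid M]
    (φ : M →+ C(Z, ℝ)) : Multiplicative M →* C(Z, ℝ) where
  toFun m := (⟨exp, continuous_exp⟩ : C(ℝ, ℝ)).comp (φ m.toAdd)
  map_one' := by ext; simp
  map_mul' m m' := by ext; simp [exp_add]

lemma ContinuousMap.exists_sum_mul_exp_near {Z M : Type*} [TopologicalSpace Z] [CompactSpace Z]
    [AddMonoid M] (φ : M →+ C(Z, ℝ)) (hφ : ∀ ⦃z₁ z₂ : Z⦄, z₁ ≠ z₂ → ∃ m, φ m z₁ ≠ φ m z₂)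
    (g : C(Z, ℝ)) {ε : ℝ} (hε : 0 < ε) :
    ∃ (p : ℕ) (r : Fin p → ℝ) (m : Fin p → M),
      ∀ z, |g z - ∑ k, r k * exp (φ (m k) z)| < ε := by
  set E := ContinuousMap.expHom φ
  have hsep : (Algebra.adjoin ℝ ((MonoidHom.mrange E) : Set C(Z, ℝ))).SeparatesPoints := by
    intro z₁ z₂ hz
    obtain ⟨m, hm⟩ := hφ hz
    refine ⟨_, ⟨E (.ofAdd m), Algebra.subset_adjoin ⟨_, rfl⟩, rfl⟩, ?_⟩
    simpa [E, ContinuousMap.expHom] using hm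
  obtain ⟨⟨h, hh⟩, hnear⟩ :=
    ContinuousMap.exists_mem_subalgebra_near_continuousMap_of_separatesPoints _ hsep g ε hε
  have hspan : h ∈ Submodule.span ℝ ((MonoidHom.mrange E) : Set C(Z, ℝ)) := by
    rwa [← Submonoid.closure_eq (MonoidHom.mrange E), ← Algebra.adjoin_eq_span]
  obtain ⟨p, r, v, rfl⟩ := Submodule.mem_span_set'.mp hspan
  choose m hm using fun k => (v k).2
  refine ⟨p, r, fun k => (m k).toAdd, fun z => ?_⟩
  have := (ContinuousMap.norm_coe_le_norm _ z).trans_lt hnear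
  rw [Real.norm_eq_abs, ContinuousMap.sub_apply, abs_sub_comm] at this
  simpa [← hm, E, ContinuousMap.expHom] using this

open Function in
lemma exists_sum_mul_comp_affine_eq_of_le (σ : ℝ → ℝ) {n N : ℕ} (hnN : n ≤ N) (c w θ : Fin n → ℝ) :
    ∃ c' w' θ' : Fin N → ℝ,
      ∀ t, ∑ i, c' i * σ (w' i * t + θ' i) = ∑ i, c i * σ (w i * t + θ i) := by
  have hinj : Injective (Fin.castLE hnN) := Fin.castLE_injective hnN
  refine ⟨extend (Fin.castLE hnN) c 0, extend (Fin.castLE hnN) w 0,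
    extend (Fin.castLE hnN) θ 0, fun t => (Fintype.sum_of_injective _ hinj _ _ ?_ ?_).symm⟩
  · rintro i hi
    rw [extend_apply' _ _ _ hi, Pi.zero_apply, zero_mul]
  · intro i
    simp only [hinj.extend_apply]

namespace TauberWiener

variable {σ : ℝ → ℝ}

lemma exists_near_of_abs_le (hσ : TauberWiener σ) {h : ℝ → ℝ} (hh : Continuous h) (R : ℝ)
    {δ : ℝ} (hδ : 0 < δ) :
    ∃ (n : ℕ) (c w θ : Fin n → ℝ),
      ∀ t, |t| ≤ R → |h t - ∑ i, c i * σ (w i * t + θ i)| < δ := by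
  obtain ⟨n, c, w, θ, hnear⟩ := hσ (-R) R ⟨fun t => h t, by fun_prop⟩ δ hδ
  exact ⟨n, c, w, θ, fun t ht => hnear ⟨t, abs_le.mp ht⟩⟩

lemma exists_near_family_of_abs_le {ι : Type*} [Fintype ι] (hσ : TauberWiener σ) {h : ι → ℝ → ℝ}
    (hh : ∀ k, Continuous (h k)) (R δ : ι → ℝ) (hδ : ∀ k, 0 < δ k) :
    ∃ (n : ℕ) (c w θ : ι → Fin n → ℝ), ∀ k t, |t| ≤ R k →
      |h k t - ∑ i, c k i * σ (w k i * t + θ k i)| < δ k := by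
  choose n c w θ hnear using fun k => hσ.exists_near_of_abs_le (hh k) (R k) (hδ k)
  choose c' w' θ' hc' using fun k =>
    exists_sum_mul_comp_affine_eq_of_le σ (Finset.le_sup (Finset.mem_univ k)) (c k) (w k) (θ k)
  exact ⟨_, c', w', θ', fun k t ht => by simpa only [hc'] using hnear k t ht⟩

lemma exists_near_sum_mul_exp (hσ : TauberWiener σ) {P Q : Type*}
    {p : ℕ} (r : Fin p → ℝ) (L : Fin p → P → ℝ) (M : Fin p → Q → ℝ) (U : Set P) (Ω : Set Q)
    (hL : ∀ k, ∃ A, ∀ u ∈ U, |L k u| ≤ A) (hM : ∀ k, ∃ B, ∀ y ∈ Ω, |M k y| ≤ B)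
    {ε : ℝ} (hε : 0 < ε) :
    ∃ (n s : ℕ) (c w θ : Fin p → Fin n → ℝ) (a w' ζ : Fin p → Fin s → ℝ),
      ∀ u ∈ U, ∀ y ∈ Ω,
        |∑ k, r k * exp (L k u + M k y) -
          ∑ k, (∑ i, c k i * σ (w k i * L k u + θ k i)) *
            (∑ l, a k l * σ (w' k l * M k y + ζ k l))| < ε := by
  choose A hA using hL
  choose B hB using hM
  have hε' : 0 < ε / (p + 1) := by positivity
  choose δ hδ hmul using fun k =>
    exists_pos_abs_mul_sub_mul_lt (|r k| * exp (A k)) (exp (B k)) hε'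
  obtain ⟨n, c, w, θ, hF⟩ :=
    hσ.exists_near_family_of_abs_le (h := fun k t => r k * exp t) (by fun_prop) A δ hδ
  obtain ⟨s, a, w', ζ, hH⟩ :=
    hσ.exists_near_family_of_abs_le (h := fun _ t => exp t) (by fun_prop) B δ hδ
  refine ⟨n, s, c, w, θ, a, w', ζ, fun u hu y hy => ?_⟩
  have hterm : ∀ k, |r k * exp (L k u + M k y) -
      (∑ i, c k i * σ (w k i * L k u + θ k i)) * (∑ l, a k l * σ (w' k l * M k y + ζ k l))|
        < ε / (p + 1) := by
    intro k
    rw [exp_add, ← mul_assoc]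
    refine hmul k _ _ _ _ ?_ ?_ (hF k _ (hA k u hu)) (hH k _ (hB k y hy))
    · rw [abs_mul, abs_exp]
      gcongr
      exact (le_abs_self _).trans (hA k u hu)
    · rw [abs_exp]
      exact exp_le_exp.mpr ((le_abs_self _).trans (hB k y hy))
  calc _ ≤ ∑ k, |r k * exp (L k u + M k y) -
        (∑ i, c k i * σ (w k i * L k u + θ k i)) * (∑ l, a k l * σ (w' k l * M k y + ζ k l))| := by
        rw [← Finset.sum_sub_distrib]; exact Finset.abs_sum_le_sum_abs _ _
    _ ≤ ∑ _k : Fin p, ε / (p + 1) := Finset.sum_le_sum fun k _ => (hterm k).le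
    _ < ε := by
        rw [Finset.sum_const, Finset.card_univ, Fintype.card_fin, nsmul_eq_mul, mul_div_assoc',
          div_lt_iff₀ (by positivity)]
        linarith

end TauberWiener

lemma EuclideanSpace.sum_smul_apply_mul_eq_mul_inner {n : ℕ} (t : ℝ)
    (ω y : EuclideanSpace ℝ (Fin n)) : ∑ j, (t • ω) j * y j = t * ⟪ω, y⟫_ℝ := by
  simp only [PiLp.inner_apply, Finset.mul_sum]
  exact Finset.sum_congr rfl fun j _ => by simp; ring

section Features

variable {K V : Type*} [TopologicalSpace K] [NormedAddCommGroup V] [InnerProductSpace ℝ V]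

noncomputable def evalCombination : (K →₀ ℝ) →ₗ[ℝ] C(K, ℝ) →L[ℝ] ℝ :=
  Finsupp.linearCombination ℝ (ContinuousMap.evalCLM ℝ)

/-- The exponent `∑ⱼ ξⱼ u(xⱼ) + ⟪ω, y⟫` of a Stone–Weierstrass generator, with the weights `ξⱼ` at
the points `xⱼ` encoded as a finitely supported function on `K`. -/
noncomputable def ridgeFeature (U : Set C(K, ℝ)) (Ω : Set V) :
    (K →₀ ℝ) × V →+ C(U × Ω, ℝ) where
  toFun m := ⟨fun z => evalCombination m.1 z.1 + ⟪m.2, (z.2 : V)⟫_ℝ, by fun_prop⟩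
  map_zero' := by ext; simp
  map_add' m m' := by ext; simp [inner_add_left]; ring

@[simp]
lemma ridgeFeature_apply (U : Set C(K, ℝ)) (Ω : Set V) (m : (K →₀ ℝ) × V) (z : U × Ω) :
    ridgeFeature U Ω m z = evalCombination m.1 z.1 + ⟪m.2, (z.2 : V)⟫_ℝ := rfl

lemma ridgeFeature_separatesPoints (U : Set C(K, ℝ)) (Ω : Set V) ⦃z₁ z₂ : U × Ω⦄
    (hz : z₁ ≠ z₂) : ∃ m, ridgeFeature U Ω m z₁ ≠ ridgeFeature U Ω m z₂ := by
  by_cases hu : z₁.1 = z₂.1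
  · have hy : (z₁.2 : V) - z₂.2 ≠ 0 :=
      sub_ne_zero.mpr fun hy => hz (Prod.ext hu (Subtype.ext hy))
    refine ⟨(0, z₁.2 - z₂.2), fun h => hy ?_⟩
    rw [← inner_self_eq_zero (𝕜 := ℝ), inner_sub_right]
    simpa [sub_eq_zero] using h
  · obtain ⟨x, hx⟩ := DFunLike.ne_iff.mp fun h => hu (Subtype.ext h)
    exact ⟨(Finsupp.single x 1, 0), by simpa [evalCombination] using hx⟩

end Features

theorem chen_chen_operator_approximation_general
    {X : Type*} [NormedAddCommGroup X]
    {dV : ℕ}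
    (ΩU : Set X)
    (ΩV : Set (EuclideanSpace ℝ (Fin dV))) (hΩV : IsCompact ΩV)
    (U : Set C(ΩU, ℝ)) (hU : IsCompact U)
    (G : C(ΩU, ℝ) → C(ΩV, ℝ)) (hG : ContinuousOn G U)
    (σ : ℝ → ℝ) (hσ : TauberWiener σ) :
    ∀ ε : ℝ, 0 < ε →
      ∃ (m n s p : ℕ) (x : Fin m → ΩU)
        (c θ : Fin p → Fin n → ℝ) (ξ : Fin p → Fin n → Fin m → ℝ)
        (a ζ : Fin p → Fin s → ℝ) (ω : Fin p → Fin s → EuclideanSpace ℝ (Fin dV)),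
        ∀ u ∈ U, ∀ y : ΩV,
          |G u y -
            ∑ k : Fin p,
              (∑ i : Fin n, c k i * σ (∑ j : Fin m, ξ k i j * u (x j) + θ k i)) *
              (∑ l : Fin s, a k l *
                σ (∑ j : Fin dV, ω k l j * (y : EuclideanSpace ℝ (Fin dV)) j + ζ k l))| < ε := by
  intro ε hε
  have : CompactSpace U := isCompact_iff_compactSpace.mp hU
  have : CompactSpace ΩV := isCompact_iff_compactSpace.mp hΩV
  let g : C(U × ΩV, ℝ) := ⟨fun z => G z.1 z.2,
    continuous_eval.comp ((hG.domRestrict.comp continuous_fst).prodMk continuous_snd)⟩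
  obtain ⟨p, r, m, hg⟩ := ContinuousMap.exists_sum_mul_exp_near (ridgeFeature U ΩV)
    (ridgeFeature_separatesPoints U ΩV) g (half_pos hε)
  obtain ⟨n, s, c, w, θ, a, w', ζ, hnet⟩ := hσ.exists_near_sum_mul_exp r
    (fun k u => evalCombination (m k).1 u) (fun k y => ⟪(m k).2, y⟫_ℝ) U ΩV
    (fun k => by
      simpa using hU.exists_bound_of_continuousOn (evalCombination (m k).1).continuous.continuousOn)
    (fun k => by
      simpa using hΩV.exists_bound_of_continuousOn (innerSL ℝ (m k).2).continuous.continuousOn)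
    (half_pos hε)
  obtain ⟨μ, x, hx⟩ := Finsupp.exists_fin_forall_linearCombination_eq
    (M := C(ΩU, ℝ) →L[ℝ] ℝ) fun k => (m k).1
  refine ⟨μ, n, s, p, x, c, θ, fun k i j => w k i * (m k).1 (x j), a, ζ,
    fun k l => w' k l • (m k).2, fun u hu y => ?_⟩
  have hL : ∀ k i, ∑ j, w k i * (m k).1 (x j) * u (x j) = w k i * evalCombination (m k).1 u := by
    intro k i
    simp [evalCombination, hx, Finset.mul_sum, mul_assoc]
  simp only [hL, EuclideanSpace.sum_smul_apply_mul_eq_mul_inner]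
  have h1 := hg (⟨u, hu⟩, y)
  simp only [ridgeFeature_apply] at h1
  exact (abs_sub_le _ _ _).trans_lt ((add_lt_add h1 (hnet u hu y y.2)).trans_eq (add_halves ε))

/-- Chen–Chen universal approximation theorem for operators. -/
theorem chen_chen_operator_approximation
    {X : Type*} [NormedAddCommGroup X] [NormedSpace ℝ X] [CompleteSpace X]
    {dV : ℕ}
    (ΩU : Set X) (hΩU : IsCompact ΩU)
    (ΩV : Set (EuclideanSpace ℝ (Fin dV))) (hΩV : IsCompact ΩV)
    (U : Set C(ΩU, ℝ)) (hU : IsCompact U)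
    (G : C(ΩU, ℝ) → C(ΩV, ℝ)) (hG : ContinuousOn G U)
    (σ : ℝ → ℝ) (hσ : TauberWiener σ) :
    ∀ ε : ℝ, 0 < ε →
      ∃ (m n s p : ℕ) (x : Fin m → ΩU)
        (c θ : Fin p → Fin n → ℝ) (ξ : Fin p → Fin n → Fin m → ℝ)
        (a ζ : Fin p → Fin s → ℝ) (ω : Fin p → Fin s → EuclideanSpace ℝ (Fin dV)),
        ∀ u ∈ U, ∀ y : ΩV,
          |G u y -
            ∑ k : Fin p,
              (∑ i : Fin n, c k i * σ (∑ j : Fin m, ξ k i j * u (x j) + θ k i)) *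
              (∑ l : Fin s, a k l *
                σ (∑ j : Fin dV, ω k l j * (y : EuclideanSpace ℝ (Fin dV)) j + ζ k l))| < ε :=
  chen_chen_operator_approximation_general ΩU ΩV hΩV U hU G hG σ hσ
end

section
/- Let Ω_U be the closure of a nonempty bounded open subset of ℝ^{d_U}, let U ⊆ C(Ω_U, ℝ) be a compact subset of the Banach space of continuous real-valued functions on Ω_U with the supremum norm, let Ω_V ⊆ ℝ^{d_V} be compact, and let G : U → C(Ω_V, ℝ) be continuous. Then for every ε > 0 there exist natural numbers p and q, continuous functions f_1, …, f_p : Ω_U → ℝ, a continuous map A : ℝ^p → ℝ^q, and continuous functions g_1, …, g_q : Ω_V → ℝ such that for all u ∈ U and all y ∈ Ω_V, | G(u)(y) − Σ_{j=1}^{q} A( ⟨f_1, u⟩, …, ⟨f_p, u⟩ )_j · g_j(y) | < ε, where ⟨f, u⟩ = ∫_{Ω_U} f(x) u(x) dx denotes the Lebesgue integral of the product f·u over Ω_U. -/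
open MeasureTheory Set

attribute [local instance] MeasureTheory.Measure.Subtype.measureSpace

namespace EARHelper

variable {d : ℕ}

lemma isFiniteMeasure {s : Set (EuclideanSpace ℝ (Fin d))} (hs : IsCompact s) :
    IsFiniteMeasure (volume : Measure s) := by
  constructor
  rw [Measure.Subtype.volume_univ hs.isClosed.measurableSet.nullMeasurableSet]
  exact hs.measure_lt_top

lemma integrable_continuous {s : Set (EuclideanSpace ℝ (Fin d))} (hs : IsCompact s)
    {f : s → ℝ} (hf : Continuous f) : Integrable f := by
  have : CompactSpace s := isCompact_iff_compactSpace.mp hs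
  have := isFiniteMeasure hs
  exact hf.integrable_of_hasCompactSupport (isClosed_tsupport f).isCompact

lemma dist_integral_le {s : Set (EuclideanSpace ℝ (Fin d))} [CompactSpace s]
    (hs : IsCompact s) (f u v : C(s, ℝ)) :
    |(∫ x : s, f x * u x) - ∫ x : s, f x * v x|
      ≤ (‖f‖ * (volume (univ : Set s)).toReal) * dist u v := by
  have := isFiniteMeasure hs
  have hi : ∀ w : C(s, ℝ), Integrable (fun x : s => f x * w x) := fun w =>
    integrable_continuous hs (f.continuous.mul w.continuous)
  rw [← integral_sub (hi u) (hi v)]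
  have hb : ∀ x : s, ‖f x * u x - f x * v x‖ ≤ ‖f‖ * dist u v := by
    intro x
    have h1 : f x * u x - f x * v x = f x * (u x - v x) := by ring
    rw [h1, norm_mul]
    have h2 : ‖f x‖ ≤ ‖f‖ := f.norm_coe_le_norm x
    have h3 : ‖u x - v x‖ ≤ dist u v := by
      calc ‖u x - v x‖ = dist (u x) (v x) := (dist_eq_norm _ _).symm
        _ ≤ dist u v := ContinuousMap.dist_apply_le_dist x
    exact mul_le_mul h2 h3 (norm_nonneg _) (norm_nonneg _)
  calc |∫ x : s, (f x * u x - f x * v x)|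
      = ‖∫ x : s, (f x * u x - f x * v x)‖ := (Real.norm_eq_abs _).symm
    _ ≤ (‖f‖ * dist u v) * (volume (univ : Set s)).toReal :=
        norm_integral_le_of_norm_le_const (Filter.Eventually.of_forall hb)
    _ = (‖f‖ * (volume (univ : Set s)).toReal) * dist u v := by ring

lemma continuous_integral_mul {s : Set (EuclideanSpace ℝ (Fin d))} [CompactSpace s]
    (hs : IsCompact s) (f : C(s, ℝ)) :
    Continuous fun u : C(s, ℝ) => ∫ x : s, f x * u x := by
  set C : ℝ := ‖f‖ * (volume (univ : Set s)).toReal with hC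
  have hC0 : 0 ≤ C := mul_nonneg (norm_nonneg _) ENNReal.toReal_nonneg
  refine LipschitzWith.continuous (K := C.toNNReal) (LipschitzWith.of_dist_le_mul ?_)
  intro u v
  rw [Real.dist_eq, Real.coe_toNNReal _ hC0]
  exact dist_integral_le hs f u v

lemma exists_integral_pos {Ω : Set (EuclideanSpace ℝ (Fin d))} (hΩo : IsOpen Ω)
    (hc : IsCompact (closure Ω)) (w : C(closure Ω, ℝ)) (hw : ∃ z, 0 < w z) :
    ∃ f : C(closure Ω, ℝ), 0 < ∫ x : closure Ω, f x * w x := by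
  obtain ⟨z, hz⟩ := hw
  have hS : IsOpen ((fun x : closure Ω => w x) ⁻¹' Ioi 0) :=
    isOpen_Ioi.preimage w.continuous
  obtain ⟨O, hO, hOeq⟩ := isOpen_induced_iff.mp hS
  have hzO : (z : EuclideanSpace ℝ (Fin d)) ∈ O := by
    have hmem : z ∈ (Subtype.val ⁻¹' O : Set (closure Ω)) := by
      rw [hOeq]; exact hz
    exact hmem
  obtain ⟨x₀, hx₀O, hx₀Ω⟩ := mem_closure_iff.mp z.2 O hO hzO
  obtain ⟨r, hr, hball⟩ := Metric.isOpen_iff.mp (hO.inter hΩo) x₀ ⟨hx₀O, hx₀Ω⟩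
  have hballΩ : Metric.ball x₀ r ⊆ Ω := fun x hx => (hball hx).2
  have hballX : Metric.ball x₀ r ⊆ closure Ω := fun x hx => subset_closure (hballΩ hx)
  have hwpos : ∀ x : closure Ω, dist (x : EuclideanSpace ℝ (Fin d)) x₀ < r → 0 < w x := by
    intro x hx
    have hmemO : (x : EuclideanSpace ℝ (Fin d)) ∈ O := (hball hx).1
    have hmem : x ∈ (Subtype.val ⁻¹' O : Set (closure Ω)) := hmemO
    rw [hOeq] at hmem
    exact hmem
  set f : C(closure Ω, ℝ) :=
    ⟨fun x => max 0 (r - dist (x : EuclideanSpace ℝ (Fin d)) x₀),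
      continuous_const.max (continuous_const.sub (continuous_subtype_val.dist continuous_const))⟩
    with hfdef
  have hf0 : ∀ x : closure Ω, 0 ≤ f x := fun x => le_max_left _ _
  have hfw : ∀ x : closure Ω, 0 ≤ f x * w x := by
    intro x
    rcases lt_or_ge (dist (x : EuclideanSpace ℝ (Fin d)) x₀) r with h | h
    · exact mul_nonneg (hf0 x) (hwpos x h).le
    · have hfx : f x = 0 := max_eq_left (by linarith)
      rw [hfx, zero_mul]
  have hint : Integrable (fun x : closure Ω => f x * w x) :=
    integrable_continuous hc (f.continuous.mul w.continuous)
  refine ⟨f, ?_⟩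
  rw [integral_pos_iff_support_of_nonneg hfw hint]
  have hsub : (Subtype.val ⁻¹' Metric.ball x₀ r : Set (closure Ω)) ⊆
      Function.support fun x : closure Ω => f x * w x := by
    intro x hx
    have hd : dist (x : EuclideanSpace ℝ (Fin d)) x₀ < r := hx
    have hfx : 0 < f x := lt_max_of_lt_right (by linarith)
    exact (mul_pos hfx (hwpos x hd)).ne'
  refine lt_of_lt_of_le ?_ (measure_mono hsub)
  rw [volume_preimage_coe hc.isClosed.measurableSet.nullMeasurableSet
    Metric.isOpen_ball.measurableSet]
  have hie : Metric.ball x₀ r ∩ closure Ω = Metric.ball x₀ r := inter_eq_left.mpr hballX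
  rw [hie]
  exact Metric.measure_ball_pos volume x₀ hr

lemma exists_integral_ne {Ω : Set (EuclideanSpace ℝ (Fin d))} (hΩo : IsOpen Ω)
    (hc : IsCompact (closure Ω)) {u v : C(closure Ω, ℝ)} (huv : u ≠ v) :
    ∃ f : C(closure Ω, ℝ),
      (∫ x : closure Ω, f x * u x) ≠ ∫ x : closure Ω, f x * v x := by
  have hi : ∀ (f w : C(closure Ω, ℝ)), Integrable (fun x : closure Ω => f x * w x) :=
    fun f w => integrable_continuous hc (f.continuous.mul w.continuous)
  have key : ∀ u v : C(closure Ω, ℝ), (∃ z, u z < v z) →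
      ∃ f : C(closure Ω, ℝ),
        (∫ x : closure Ω, f x * u x) < ∫ x : closure Ω, f x * v x := by
    intro u v ⟨z, hz⟩
    obtain ⟨f, hf⟩ := exists_integral_pos hΩo hc (v - u) ⟨z, by simpa using sub_pos.mpr hz⟩
    refine ⟨f, sub_pos.mp ?_⟩
    rw [← integral_sub (hi f v) (hi f u)]
    have hptw : ∀ x : closure Ω, f x * (v - u) x = f x * v x - f x * u x := by
      intro x; simp [mul_sub]
    calc (0:ℝ) < ∫ x : closure Ω, f x * (v - u) x := hf
      _ = ∫ x : closure Ω, (f x * v x - f x * u x) :=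
        integral_congr_ae (Filter.Eventually.of_forall hptw)
  have hne : ∃ z, u z ≠ v z := by
    by_contra h
    push_neg at h
    exact huv (ContinuousMap.ext h)
  obtain ⟨z, hz⟩ := hne
  rcases lt_or_gt_of_ne hz with h | h
  · obtain ⟨f, hf⟩ := key u v ⟨z, h⟩
    exact ⟨f, hf.ne⟩
  · obtain ⟨f, hf⟩ := key v u ⟨z, h⟩
    exact ⟨f, hf.ne'⟩

end EARHelper

/-- Uniform universal approximation for encode-approximate-reconstruct operator learning
models with inner-product encoders, a continuous approximator, and a linear reconstructor. -/
theorem encode_approximate_reconstruct_uniform_approximation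
    {dU dV : ℕ}
    (Ω : Set (EuclideanSpace ℝ (Fin dU)))
    (hΩo : IsOpen Ω) (hΩne : Ω.Nonempty) (hΩb : Bornology.IsBounded Ω)
    (ΩV : Set (EuclideanSpace ℝ (Fin dV))) (hΩV : IsCompact ΩV)
    (U : Set C(closure Ω, ℝ)) (hU : IsCompact U)
    (G : C(closure Ω, ℝ) → C(ΩV, ℝ)) (hG : ContinuousOn G U) :
    ∀ ε : ℝ, 0 < ε →
      ∃ (p q : ℕ) (f : Fin p → C(closure Ω, ℝ))
        (A : (Fin p → ℝ) → (Fin q → ℝ)) (_ : Continuous A)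
        (g : Fin q → C(ΩV, ℝ)),
        ∀ u ∈ U, ∀ y : ΩV,
          |G u y -
            ∑ j : Fin q,
              A (fun i => ∫ x : (closure Ω : Set (EuclideanSpace ℝ (Fin dU))), f i x * u x) j *
                g j y| < ε := by
  intro ε hε
  have hXc : IsCompact (closure Ω) := hΩb.isCompact_closure
  haveI : CompactSpace (closure Ω) := isCompact_iff_compactSpace.mp hXc
  haveI := EARHelper.isFiniteMeasure hXc
  haveI : CompactSpace ΩV := isCompact_iff_compactSpace.mp hΩV
  -- trivial case: U empty
  rcases U.eq_empty_or_nonempty with hUe | hUne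
  · refine ⟨0, 0, fun _ => 0, id, continuous_id, fun _ => 0, ?_⟩
    intro u hu
    rw [hUe] at hu
    exact absurd hu (notMem_empty u)
  -- uniform continuity of G on U
  obtain ⟨δ, hδ, hδG⟩ := Metric.uniformContinuousOn_iff.mp
    (hU.uniformContinuousOn_of_continuous hG) (ε / 2) (half_pos hε)
  -- inner-product functionals
  set I : C(closure Ω, ℝ) → C(closure Ω, ℝ) → ℝ :=
    fun f u => ∫ x : closure Ω, f x * u x with hIdef
  have hIcont : ∀ f, Continuous (I f) := fun f => EARHelper.continuous_integral_mul hXc f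
  -- the compact set of "far apart" pairs
  set K : Set (C(closure Ω, ℝ) × C(closure Ω, ℝ)) :=
    (U ×ˢ U) ∩ {pr | δ ≤ dist pr.1 pr.2} with hKdef
  have hKc : IsCompact K := (hU.prod hU).inter_right
    (isClosed_le continuous_const (continuous_fst.dist continuous_snd))
  -- choose a separating functional for each pair in K
  have hsep : ∀ k : K, ∃ f : C(closure Ω, ℝ), I f k.1.1 ≠ I f k.1.2 := by
    intro k
    have hne : k.1.1 ≠ k.1.2 := by
      intro h
      have hd : δ ≤ dist k.1.1 k.1.2 := k.2.2
      rw [h, dist_self] at hd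
      linarith
    exact EARHelper.exists_integral_ne hΩo hXc hne
  choose F hF using hsep
  -- finite subcover of K by separation sets
  obtain ⟨t, ht⟩ := hKc.elim_finite_subcover
    (fun k : K => {pr : C(closure Ω, ℝ) × C(closure Ω, ℝ) | I (F k) pr.1 ≠ I (F k) pr.2})
    (fun k => isOpen_ne_fun ((hIcont (F k)).comp continuous_fst)
      ((hIcont (F k)).comp continuous_snd))
    (fun x hx => mem_iUnion.mpr ⟨⟨x, hx⟩, hF ⟨x, hx⟩⟩)
  set p := t.card with hp
  set fi : Fin p → C(closure Ω, ℝ) := fun i => F (t.equivFin.symm i).1 with hfi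
  -- the discrepancy function
  set Φ : C(closure Ω, ℝ) × C(closure Ω, ℝ) → ℝ :=
    fun pr => ∑ i : Fin p, |I (fi i) pr.1 - I (fi i) pr.2| with hΦdef
  have hΦcont : Continuous Φ := continuous_finset_sum _ fun i _ =>
    (((hIcont _).comp continuous_fst).sub ((hIcont _).comp continuous_snd)).abs
  have hΦpos : ∀ pr ∈ K, 0 < Φ pr := by
    intro pr hpr
    obtain ⟨k, hk, hkmem⟩ := mem_iUnion₂.mp (ht hpr)
    have hidx : ∃ i : Fin p, fi i = F k := ⟨t.equivFin ⟨k, hk⟩, by simp [hfi]⟩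
    obtain ⟨i, hi⟩ := hidx
    refine Finset.sum_pos' (fun i _ => abs_nonneg _) ⟨i, Finset.mem_univ _, ?_⟩
    rw [hi]
    exact abs_pos.mpr (sub_ne_zero.mpr hkmem)
  -- a positive threshold c
  have hcex : ∃ c > 0, ∀ u ∈ U, ∀ v ∈ U, Φ (u, v) < c → dist u v < δ := by
    rcases K.eq_empty_or_nonempty with hKe | hKne
    · refine ⟨1, one_pos, fun u hu v hv _ => ?_⟩
      by_contra h
      have hm : (u, v) ∈ K := ⟨⟨hu, hv⟩, not_lt.mp h⟩
      rw [hKe] at hm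
      exact notMem_empty _ hm
    · obtain ⟨k₀, hk₀K, hk₀min⟩ := hKc.exists_isMinOn hKne hΦcont.continuousOn
      refine ⟨Φ k₀, hΦpos k₀ hk₀K, fun u hu v hv h => ?_⟩
      by_contra hcon
      have hm : (u, v) ∈ K := ⟨⟨hu, hv⟩, not_lt.mp hcon⟩
      exact absurd (hk₀min hm) (not_le.mpr h)
  obtain ⟨c, hc0, hcP⟩ := hcex
  -- global Lipschitz bound for Φ
  set Cs : ℝ := ∑ i : Fin p, ‖fi i‖ * (volume (univ : Set (closure Ω))).toReal with hCs
  have hCs0 : 0 ≤ Cs :=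
    Finset.sum_nonneg fun i _ => mul_nonneg (norm_nonneg _) ENNReal.toReal_nonneg
  have hΦle : ∀ u v : C(closure Ω, ℝ), Φ (u, v) ≤ Cs * dist u v := by
    intro u v
    calc Φ (u, v) = ∑ i : Fin p, |I (fi i) u - I (fi i) v| := rfl
      _ ≤ ∑ i : Fin p, (‖fi i‖ * (volume (univ : Set (closure Ω))).toReal) * dist u v :=
        Finset.sum_le_sum fun i _ => EARHelper.dist_integral_le hXc (fi i) u v
      _ = Cs * dist u v := by rw [hCs, Finset.sum_mul]
  set δ' : ℝ := min δ (c / (2 * (Cs + 1))) with hδ'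
  have hδ'0 : 0 < δ' := lt_min hδ (div_pos hc0 (by linarith))
  have hkey : ∀ u v : C(closure Ω, ℝ), dist u v < δ' → Φ (u, v) ≤ c / 2 := by
    intro u v h
    have h1 : Φ (u, v) ≤ Cs * dist u v := hΦle u v
    have h2 : Cs * dist u v ≤ Cs * (c / (2 * (Cs + 1))) :=
      mul_le_mul_of_nonneg_left (le_of_lt (lt_of_lt_of_le h (min_le_right _ _))) hCs0
    have h3 : Cs * (c / (2 * (Cs + 1))) ≤ c / 2 := by
      have hb : (0:ℝ) < 2 * (Cs + 1) := by linarith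
      have ha : 0 ≤ c / (2 * (Cs + 1)) := le_of_lt (div_pos hc0 hb)
      have hmc : (c / (2 * (Cs + 1))) * (2 * (Cs + 1)) = c := div_mul_cancel₀ c hb.ne'
      nlinarith
    linarith
  -- a finite δ'-net of U
  obtain ⟨t', ht'⟩ := hU.elim_finite_subcover
    (fun u : U => Metric.ball (u : C(closure Ω, ℝ)) δ')
    (fun u => Metric.isOpen_ball)
    (fun x hx => mem_iUnion.mpr ⟨⟨x, hx⟩, Metric.mem_ball_self hδ'0⟩)
  set q := t'.card with hq
  set uc : Fin q → C(closure Ω, ℝ) := fun j => ((t'.equivFin.symm j).1 : U) with huc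
  have hucU : ∀ j, uc j ∈ U := fun j => ((t'.equivFin.symm j).1 : U).2
  -- the approximator
  set e : Fin q → Fin p → ℝ := fun j i => I (fi i) (uc j) with he
  set D : Fin q → (Fin p → ℝ) → ℝ := fun j z => ∑ i : Fin p, |z i - e j i| with hD
  set φ : Fin q → (Fin p → ℝ) → ℝ := fun j z => max 0 (c - D j z) with hφ
  set Sz : (Fin p → ℝ) → ℝ := fun z => ∑ j : Fin q, φ j z with hSz
  have hDcont : ∀ j, Continuous (D j) := fun j =>
    continuous_finset_sum _ fun i _ => ((continuous_apply i).sub continuous_const).abs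
  have hφcont : ∀ j, Continuous (φ j) := fun j =>
    continuous_const.max (continuous_const.sub (hDcont j))
  have hScont : Continuous Sz := continuous_finset_sum _ fun j _ => hφcont j
  have hden : ∀ z, max (Sz z) (c / 2) ≠ 0 := fun z =>
    ne_of_gt (lt_max_of_lt_right (by linarith))
  set A : (Fin p → ℝ) → (Fin q → ℝ) := fun z j => φ j z / max (Sz z) (c / 2) with hA
  have hAcont : Continuous A :=
    continuous_pi fun j => (hφcont j).div (hScont.max continuous_const) hden
  refine ⟨p, q, fi, A, hAcont, fun j => G (uc j), ?_⟩
  intro u hu y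
  set z : Fin p → ℝ :=
    fun i => ∫ x : (closure Ω : Set (EuclideanSpace ℝ (Fin dU))), fi i x * u x with hz
  show |G u y - ∑ j : Fin q, A z j * G (uc j) y| < ε
  have hzI : z = fun i => I (fi i) u := rfl
  have hDΦ : ∀ j, D j z = Φ (u, uc j) := fun j => rfl
  have hφ0 : ∀ j, 0 ≤ φ j z := fun j => le_max_left _ _
  have hA0 : ∀ j, 0 ≤ A z j := fun j =>
    div_nonneg (hφ0 j) (le_max_of_le_right (by linarith))
  -- lower bound on the normalizer
  have hSzge : c / 2 ≤ Sz z := by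
    obtain ⟨k, hk, hkmem⟩ := mem_iUnion₂.mp (ht' hu)
    set j₀ : Fin q := t'.equivFin ⟨k, hk⟩ with hj₀
    have hucj₀ : uc j₀ = (k : C(closure Ω, ℝ)) := by simp [huc, hj₀]
    have hdist : dist u (uc j₀) < δ' := by
      rw [hucj₀]
      exact hkmem
    have hDle : D j₀ z ≤ c / 2 := by
      rw [hDΦ j₀]
      exact hkey u (uc j₀) hdist
    have hφge : c / 2 ≤ φ j₀ z := le_max_of_le_right (by linarith)
    calc c / 2 ≤ φ j₀ z := hφge
      _ ≤ Sz z := Finset.single_le_sum (fun j _ => hφ0 j) (Finset.mem_univ j₀)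
  have hSzpos : 0 < Sz z := lt_of_lt_of_le (by linarith) hSzge
  have hdeneq : max (Sz z) (c / 2) = Sz z := max_eq_left hSzge
  have hAsum : ∑ j : Fin q, A z j = 1 := by
    have : ∑ j : Fin q, A z j = (∑ j : Fin q, φ j z) / max (Sz z) (c / 2) :=
      (Finset.sum_div _ _ _).symm
    rw [this, hdeneq]
    exact div_self hSzpos.ne'
  -- per-term bound
  have hterm : ∀ j, A z j * |G u y - G (uc j) y| ≤ A z j * (ε / 2) := by
    intro j
    rcases eq_or_lt_of_le (hA0 j) with h0 | hpos
    · rw [← h0, zero_mul, zero_mul]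
    · have hφpos : 0 < φ j z := by
        by_contra h
        push_neg at h
        have hzero : φ j z = 0 := le_antisymm h (hφ0 j)
        rw [hA] at hpos
        simp only [hzero, zero_div] at hpos
        exact lt_irrefl 0 hpos
      have hDlt : D j z < c := by
        by_contra h
        push_neg at h
        have : φ j z = 0 := max_eq_left (by linarith)
        rw [this] at hφpos
        exact lt_irrefl 0 hφpos
      have hΦlt : Φ (u, uc j) < c := by rw [← hDΦ j]; exact hDlt
      have hdist : dist u (uc j) < δ := hcP u hu (uc j) (hucU j) hΦlt
      have hGG : dist (G u) (G (uc j)) < ε / 2 := hδG u hu (uc j) (hucU j) hdist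
      have hptw : |G u y - G (uc j) y| ≤ dist (G u) (G (uc j)) := by
        calc |G u y - G (uc j) y| = dist (G u y) (G (uc j) y) := (Real.dist_eq _ _).symm
          _ ≤ dist (G u) (G (uc j)) := ContinuousMap.dist_apply_le_dist y
      exact mul_le_mul_of_nonneg_left (le_trans hptw hGG.le) (hA0 j)
  have hexp : ∑ j : Fin q, A z j * (G u y - G (uc j) y)
      = G u y - ∑ j : Fin q, A z j * G (uc j) y := by
    simp only [mul_sub]
    rw [Finset.sum_sub_distrib, ← Finset.sum_mul, hAsum, one_mul]
  calc |G u y - ∑ j : Fin q, A z j * G (uc j) y|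
      = |∑ j : Fin q, A z j * (G u y - G (uc j) y)| := by rw [hexp]
    _ ≤ ∑ j : Fin q, |A z j * (G u y - G (uc j) y)| := Finset.abs_sum_le_sum_abs _ _
    _ = ∑ j : Fin q, A z j * |G u y - G (uc j) y| := by
        refine Finset.sum_congr rfl fun j _ => ?_
        rw [abs_mul, abs_of_nonneg (hA0 j)]
    _ ≤ ∑ j : Fin q, A z j * (ε / 2) := Finset.sum_le_sum fun j _ => hterm j
    _ = ε / 2 := by rw [← Finset.sum_mul, hAsum, one_mul]
    _ < ε := by linarith
end

section
/- Let Ω be a nonempty bounded open subset of ℝ^d and let U be a compact subset of the Banach space C(cl(Ω), ℝ) of continuous real-valued functions on the closure cl(Ω) of Ω, equipped with the supremum norm. Let x₀ ∈ cl(Ω) and let δ > 0. Then there exists a continuous function f : cl(Ω) → ℝ with f ≥ 0 and ∫_Ω f(x) dx = 1 such that for every u ∈ U, | u(x₀) − ∫_Ω f(x) u(x) dx | < δ. -/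
open MeasureTheory

attribute [local instance] MeasureTheory.Measure.Subtype.measureSpace

/-- Point evaluation at `x₀` can be uniformly approximated over a compact family `U` of
continuous functions by integration against a fixed nonnegative normalized kernel. -/
theorem point_evaluation_approx_by_kernel
    {d : ℕ} (Ω : Set (EuclideanSpace ℝ (Fin d)))
    (hΩo : IsOpen Ω) (hΩne : Ω.Nonempty) (hΩb : Bornology.IsBounded Ω)
    (U : Set C(closure Ω, ℝ)) (hU : IsCompact U)
    (x₀ : closure Ω) (δ : ℝ) (hδ : 0 < δ) :
    ∃ f : C(closure Ω, ℝ),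
      (∀ x, 0 ≤ f x) ∧
      (∫ x in (Subtype.val ⁻¹' Ω : Set (closure Ω)), f x) = 1 ∧
      ∀ u ∈ U,
        |u x₀ - ∫ x in (Subtype.val ⁻¹' Ω : Set (closure Ω)), f x * u x| < δ := by
  classical
  haveI hKcs : CompactSpace (closure Ω) :=
    isCompact_iff_compactSpace.mp hΩb.isCompact_closure
  haveI : IsFiniteMeasure (volume : Measure (closure Ω)) := by
    constructor
    rw [MeasureTheory.Measure.Subtype.volume_univ
      isClosed_closure.measurableSet.nullMeasurableSet]
    exact hΩb.isCompact_closure.measure_lt_top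
  -- Step 1: uniform small oscillation near x₀ over U
  obtain ⟨t, htf, hcover⟩ := Metric.totallyBounded_iff.mp hU.totallyBounded (δ/6)
    (by positivity)
  have hcont : ∀ v : C(closure Ω, ℝ), ∃ rv > 0, ∀ x : closure Ω,
      dist x x₀ < rv → dist (v x) (v x₀) < δ/6 := by
    intro v
    have := Metric.continuousAt_iff.mp (v.continuous.continuousAt (x := x₀))
    obtain ⟨rv, hrv, h⟩ := this (δ/6) (by positivity)
    exact ⟨rv, hrv, fun x hx => h hx⟩
  choose rv hrvpos hrv using hcont
  set s : Finset ℝ := insert 1 (htf.toFinset.image rv) with hs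
  have hsne : s.Nonempty := ⟨1, Finset.mem_insert_self _ _⟩
  set r : ℝ := s.min' hsne with hrdef
  have hrpos : 0 < r := by
    have : r ∈ s := Finset.min'_mem s hsne
    rcases Finset.mem_insert.mp this with h | h
    · rw [h]; exact one_pos
    · obtain ⟨v, _, hv⟩ := Finset.mem_image.mp h
      rw [← hv]; exact hrvpos v
  have hosc : ∀ u ∈ U, ∀ x : closure Ω, dist x x₀ < r → |u x - u x₀| ≤ δ/2 := by
    intro u hu x hx
    obtain ⟨v, hv, huv⟩ := Set.mem_iUnion₂.mp (hcover hu)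
    have hdistuv : dist u v < δ/6 := Metric.mem_ball.mp huv
    have hxr : dist x x₀ < rv v := by
      refine lt_of_lt_of_le hx (Finset.min'_le s _ ?_)
      exact Finset.mem_insert_of_mem (Finset.mem_image.mpr ⟨v, htf.mem_toFinset.mpr hv, rfl⟩)
    have h1 : |u x - v x| ≤ dist u v := by
      rw [← Real.dist_eq]; exact ContinuousMap.dist_apply_le_dist x
    have h2 : |v x - v x₀| < δ/6 := by
      rw [← Real.dist_eq]; exact hrv v x hxr
    have h3 : |v x₀ - u x₀| ≤ dist u v := by
      rw [← Real.dist_eq, dist_comm (v x₀)]; exact ContinuousMap.dist_apply_le_dist x₀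
    calc |u x - u x₀| = |(u x - v x) + (v x - v x₀) + (v x₀ - u x₀)| := by ring_nf
      _ ≤ |(u x - v x) + (v x - v x₀)| + |v x₀ - u x₀| := abs_add_le _ _
      _ ≤ |u x - v x| + |v x - v x₀| + |v x₀ - u x₀| := by
          gcongr; exact abs_add_le _ _
      _ ≤ δ/2 := by
          have e1 := lt_of_le_of_lt h1 hdistuv
          have e3 := lt_of_le_of_lt h3 hdistuv
          linarith
  -- Step 2: the kernel
  set g : closure Ω → ℝ := fun x => max 0 (r - dist x x₀) with hgdef
  have hgcont : Continuous g :=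
    continuous_const.max (continuous_const.sub ((continuous_id.dist continuous_const)))
  have hgnonneg : ∀ x, 0 ≤ g x := fun x => le_max_left _ _
  have hgzero : ∀ x : closure Ω, r ≤ dist x x₀ → g x = 0 := by
    intro x hx
    simp only [hgdef]
    exact max_eq_left (by linarith)
  have hgsupp : Function.support g = Subtype.val ⁻¹' Metric.ball (x₀ : EuclideanSpace ℝ (Fin d)) r := by
    ext x
    simp only [Function.mem_support, hgdef, Set.mem_preimage, Metric.mem_ball]
    rw [← Subtype.dist_eq]
    constructor
    · intro h
      by_contra hc
      exact h (max_eq_left (by push_neg at hc; linarith))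
    · intro h
      have : 0 < r - dist x x₀ := by linarith
      rw [max_eq_right this.le]
      exact this.ne'
  have hSmeas : MeasurableSet (Subtype.val ⁻¹' Ω : Set (closure Ω)) :=
    hΩo.measurableSet.preimage measurable_subtype_coe
  -- integrability of continuous functions
  have hint : ∀ F : closure Ω → ℝ, Continuous F → Integrable F (volume : Measure (closure Ω)) := by
    intro F hF
    exact hF.integrable_of_hasCompactSupport (isClosed_tsupport F).isCompact
  have hgint : Integrable g (volume : Measure (closure Ω)) := hint g hgcont
  -- positivity of the normalization constant
  set S : Set (closure Ω) := (Subtype.val ⁻¹' Ω : Set (closure Ω)) with hSdef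
  set I : ℝ := ∫ x in S, g x with hIdef
  have hIpos : 0 < I := by
    rw [hIdef]
    refine (setIntegral_pos_iff_support_of_nonneg_ae
      (Filter.Eventually.of_forall fun x => hgnonneg x) hgint.integrableOn).mpr ?_
    rw [hgsupp, hSdef, ← Set.preimage_inter]
    rw [volume_preimage_coe isClosed_closure.measurableSet.nullMeasurableSet
      (Metric.isOpen_ball.inter hΩo).measurableSet]
    have hsub : Metric.ball (x₀ : EuclideanSpace ℝ (Fin d)) r ∩ Ω ∩ closure Ω
        = Metric.ball (x₀ : EuclideanSpace ℝ (Fin d)) r ∩ Ω := by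
      apply Set.inter_eq_self_of_subset_left
      exact (Set.inter_subset_right).trans subset_closure
    rw [hsub]
    refine (Metric.isOpen_ball.inter hΩo).measure_pos volume ?_
    obtain ⟨b, hbΩ, hbd⟩ := Metric.mem_closure_iff.mp x₀.2 r hrpos
    exact ⟨b, Metric.mem_ball.mpr (by rw [dist_comm]; exact hbd), hbΩ⟩
  -- define f
  refine ⟨⟨fun x => I⁻¹ * g x, continuous_const.mul hgcont⟩, ?_, ?_, ?_⟩
  · intro x
    exact mul_nonneg (inv_nonneg.mpr hIpos.le) (hgnonneg x)
  · show (∫ x in S, I⁻¹ * g x) = 1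
    rw [integral_const_mul, ← hIdef, inv_mul_cancel₀ hIpos.ne']
  · intro u hu
    show |u x₀ - ∫ x in S, (I⁻¹ * g x) * u x| < δ
    set f : closure Ω → ℝ := fun x => I⁻¹ * g x with hfdef
    have hfcont : Continuous f := continuous_const.mul hgcont
    have hfone : (∫ x in S, f x) = 1 := by
      simp only [hfdef]
      rw [integral_const_mul, ← hIdef, inv_mul_cancel₀ hIpos.ne']
    have hfnonneg : ∀ x, 0 ≤ f x := fun x =>
      mul_nonneg (inv_nonneg.mpr hIpos.le) (hgnonneg x)
    have hfu_int : IntegrableOn (fun x => f x * u x) S :=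
      (hint _ (hfcont.mul u.continuous)).integrableOn
    have hfc_int : IntegrableOn (fun x => f x * u x₀) S :=
      (hint _ (hfcont.mul continuous_const)).integrableOn
    have hconst : (∫ x in S, f x * u x₀) = u x₀ := by
      rw [integral_mul_const, hfone, one_mul]
    have key : u x₀ - (∫ x in S, f x * u x) = ∫ x in S, f x * (u x₀ - u x) := by
      have hsub := integral_sub hfc_int hfu_int
      rw [hconst] at hsub
      rw [← hsub]
      exact integral_congr_ae (Filter.Eventually.of_forall fun x => by ring)
    rw [key]
    have habs : |∫ x in S, f x * (u x₀ - u x)| ≤ ∫ x in S, |f x| * |u x₀ - u x| := by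
      simpa [Real.norm_eq_abs, abs_mul] using
        norm_integral_le_integral_norm (μ := (volume : Measure (closure Ω)).restrict S)
          (fun x => f x * (u x₀ - u x))
    have hbound : (∫ x in S, |f x| * |u x₀ - u x|) ≤ ∫ x in S, f x * (δ/2) := by
      refine setIntegral_mono_on ?_ ?_ hSmeas ?_
      · exact (hint _ (hfcont.abs.mul (continuous_const.sub u.continuous).abs)).integrableOn
      · exact ((hint _ hfcont).mul_const _).integrableOn
      · intro x hx
        rw [abs_of_nonneg (hfnonneg x)]
        rcases lt_or_ge (dist x x₀) r with hlt | hge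
        · refine mul_le_mul_of_nonneg_left ?_ (hfnonneg x)
          rw [abs_sub_comm]
          exact hosc u hu x hlt
        · have : f x = 0 := by rw [hfdef]; simp [hgzero x hge]
          rw [this]; simp
    have hval : (∫ x in S, f x * (δ/2)) = δ/2 := by
      rw [integral_mul_const, hfone, one_mul]
    calc |∫ x in S, f x * (u x₀ - u x)| ≤ ∫ x in S, |f x| * |u x₀ - u x| := habs
      _ ≤ ∫ x in S, f x * (δ/2) := hbound
      _ = δ/2 := hval
      _ < δ := by linarith
end

section
/- Let H be a real separable Hilbert space with inner product ⟨·,·⟩ and norm ‖·‖, and let (e_k)_{k≥1} be a Hilbert basis (complete orthonormal sequence) of H. Let μ be a Borel probability measure on H such that σ² := ∫_H ‖u‖² dμ(u) satisfies 0 < σ² < ∞. Let ε > 0, let p ∈ ℕ with p ≥ 1, and let φ̃_1, …, φ̃_p ∈ H satisfy ‖ φ̃_k − e_k ‖ ≤ ε / (σ √p) for each k = 1, …, p. Then the squared statistical encoding error satisfies ∫_H ‖ u − Σ_{k=1}^{p} ⟨φ̃_k, u⟩ e_k ‖² dμ(u) ≤ ε² + Σ_{k=p+1}^{∞} ∫_H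 | ⟨e_k, u⟩ |² dμ(u). -/
open MeasureTheory Finset
open scoped RealInnerProductSpace

/-!
Writing `aₖ = ⟪eₖ, u⟫` and `cₖ = ⟪φₖ, u⟫`, the pointwise error is
`‖u - ∑ cₖ eₖ‖² = (‖u‖² - ∑ aₖ²) + ∑ (aₖ - cₖ)²`. The first part integrates, by Parseval's
identity and dominated convergence, to the tail `∑_{k ≥ p} ∫ ⟪eₖ, u⟫² dμ`; the second is
`∑ ∫ ⟪eₖ - φₖ, u⟫² dμ ≤ ∑ ‖eₖ - φₖ‖² σ² ≤ p · ε² / (σ² p) · σ² = ε²` by Cauchy–Schwarz.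
-/

theorem HasSum.subtype_le_sub_sum_range {G : Type*} [AddCommGroup G] [TopologicalSpace G]
    [IsTopologicalAddGroup G] {f : ℕ → G} {a : G} (hf : HasSum f a) (p : ℕ) :
    HasSum (fun k : {k : ℕ // p ≤ k} => f k) (a - ∑ k ∈ range p, f k) := by
  have hcompl := ((range p).hasSum_iff_compl).1 hf
  exact (Equiv.subtypeEquivRight fun k => by simp).hasSum_iff.2 hcompl

theorem Orthonormal.norm_sub_sum_inner_smul_sq {H ι : Type*} [NormedAddCommGroup H]
    [InnerProductSpace ℝ H] {v : ι → H} (hv : Orthonormal ℝ v) (s : Finset ι) (φ : ι → H)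
    (u : H) :
    ‖u - ∑ k ∈ s, ⟪φ k, u⟫ • v k‖ ^ 2
      = ‖u‖ ^ 2 - ∑ k ∈ s, ⟪v k, u⟫ ^ 2 + ∑ k ∈ s, ⟪v k - φ k, u⟫ ^ 2 := by
  have hcross : ⟪u, ∑ k ∈ s, ⟪φ k, u⟫ • v k⟫ = ∑ k ∈ s, ⟪v k, u⟫ * ⟪φ k, u⟫ := by
    rw [inner_sum]
    exact sum_congr rfl fun k _ => by rw [real_inner_smul_right, real_inner_comm (v k) u, mul_comm]
  have hnorm : ‖∑ k ∈ s, ⟪φ k, u⟫ • v k‖ ^ 2 = ∑ k ∈ s, ⟪φ k, u⟫ ^ 2 := by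
    rw [← real_inner_self_eq_norm_sq, hv.inner_sum]
    simp only [conj_trivial, sq]
  rw [norm_sub_sq_real, hcross, hnorm]
  simp only [inner_sub_left, sub_sq, sum_add_distrib, sum_sub_distrib, mul_assoc, ← mul_sum]
  ring

theorem inner_sq_le_norm_sq_mul_norm_sq {H : Type*} [NormedAddCommGroup H] [InnerProductSpace ℝ H]
    (w u : H) : ⟪w, u⟫ ^ 2 ≤ ‖w‖ ^ 2 * ‖u‖ ^ 2 := by
  simpa only [← sq, real_inner_self_eq_norm_sq] using real_inner_mul_inner_self_le w u

section Integrals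

variable {H : Type*} [NormedAddCommGroup H] [InnerProductSpace ℝ H] [MeasurableSpace H]
  [BorelSpace H] {μ : Measure H}

theorem integrable_inner_sq (hμ : Integrable (fun u => ‖u‖ ^ 2) μ) (w : H) :
    Integrable (fun u => ⟪w, u⟫ ^ 2) μ :=
  (hμ.const_mul (‖w‖ ^ 2)).mono' ((innerSL ℝ w).continuous.pow 2).aestronglyMeasurable
    (.of_forall fun u => by
      simpa only [Real.norm_eq_abs, abs_sq] using inner_sq_le_norm_sq_mul_norm_sq w u)

theorem integral_inner_sq_le (hμ : Integrable (fun u => ‖u‖ ^ 2) μ) (w : H) :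
    ∫ u, ⟪w, u⟫ ^ 2 ∂μ ≤ ‖w‖ ^ 2 * ∫ u, ‖u‖ ^ 2 ∂μ := by
  rw [← integral_const_mul]
  exact integral_mono (integrable_inner_sq hμ w) (hμ.const_mul _)
    (inner_sq_le_norm_sq_mul_norm_sq w)

theorem HilbertBasis.hasSum_integral_inner_sq {ι : Type*} [Countable ι] (e : HilbertBasis ι ℝ H)
    (hμ : Integrable (fun u => ‖u‖ ^ 2) μ) :
    HasSum (fun k => ∫ u, ⟪e k, u⟫ ^ 2 ∂μ) (∫ u, ‖u‖ ^ 2 ∂μ) := by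
  have parseval : ∀ u : H, HasSum (fun k => ⟪e k, u⟫ ^ 2) (‖u‖ ^ 2) := fun u => by
    simpa only [real_inner_self_eq_norm_sq, real_inner_comm u, sq] using
      e.hasSum_inner_mul_inner u u
  refine hasSum_integral_of_dominated_convergence (fun k u => ⟪e k, u⟫ ^ 2)
    (fun k => (integrable_inner_sq hμ (e k)).aestronglyMeasurable)
    (fun k => .of_forall fun u => by simp only [Real.norm_eq_abs, abs_sq, le_refl])
    (.of_forall fun u => (parseval u).summable) ?_ (.of_forall parseval)
  simpa only [(parseval _).tsum_eq] using hμ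

theorem sum_integral_inner_sq_le_sq (hμ : Integrable (fun u => ‖u‖ ^ 2) μ) {p : ℕ}
    (w : Fin p → H) {ε : ℝ}
    (hw : ∀ k, ‖w k‖ ≤ ε / (Real.sqrt (∫ u, ‖u‖ ^ 2 ∂μ) * Real.sqrt p)) :
    ∑ k, ∫ u, ⟪w k, u⟫ ^ 2 ∂μ ≤ ε ^ 2 := by
  set σ2 := ∫ u, ‖u‖ ^ 2 ∂μ
  have hσ2 : 0 ≤ σ2 := integral_nonneg fun u => sq_nonneg _
  calc ∑ k, ∫ u, ⟪w k, u⟫ ^ 2 ∂μ ≤ ∑ k, ‖w k‖ ^ 2 * σ2 :=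
        sum_le_sum fun k _ => integral_inner_sq_le hμ (w k)
    _ ≤ ∑ _k : Fin p, (ε / (Real.sqrt σ2 * Real.sqrt p)) ^ 2 * σ2 := by
        gcongr with k; exact hw k
    _ = ε ^ 2 * (σ2 / σ2) * (p / p) := by
        rw [sum_const, card_univ, Fintype.card_fin, nsmul_eq_mul, div_pow, mul_pow,
          Real.sq_sqrt hσ2, Real.sq_sqrt p.cast_nonneg]
        ring
    -- each ratio is `1`, or `0` if its denominator vanishes
    _ ≤ ε ^ 2 :=
        mul_le_of_le_one_right (by positivity) (div_self_le_one _) |>.trans <|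
          mul_le_of_le_one_right (sq_nonneg ε) (div_self_le_one _)

end Integrals

theorem statistical_encoding_error_bound_of_basis_approx_general
    {H : Type*} [NormedAddCommGroup H] [InnerProductSpace ℝ H]
    [MeasurableSpace H] [BorelSpace H]
    (e : HilbertBasis ℕ ℝ H)
    (μ : Measure H)
    (hμ : Integrable (fun u => ‖u‖ ^ 2) μ)
    (ε : ℝ)
    (p : ℕ) (φ : Fin p → H)
    (hφ : ∀ k : Fin p,
      ‖φ k - e (k : ℕ)‖ ≤ ε / (Real.sqrt (∫ u, ‖u‖ ^ 2 ∂μ) * Real.sqrt p)) :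
    (∫ u, ‖u - ∑ k : Fin p, ⟪φ k, u⟫ • e (k : ℕ)‖ ^ 2 ∂μ) ≤
      ε ^ 2 + ∑' k : {k : ℕ // p ≤ k}, ∫ u, ⟪e (k : ℕ), u⟫ ^ 2 ∂μ := by
  have hsum : ∀ w : Fin p → H, Integrable (fun u => ∑ k, ⟪w k, u⟫ ^ 2) μ := fun w =>
    integrable_finsetSum _ fun k _ => integrable_inner_sq hμ (w k)
  have pointwise := (e.orthonormal.comp _ Fin.val_injective).norm_sub_sum_inner_smul_sq univ φ
  have tail := (e.hasSum_integral_inner_sq hμ).subtype_le_sub_sum_range p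
  simp only [Function.comp_apply] at pointwise
  calc (∫ u, ‖u - ∑ k : Fin p, ⟪φ k, u⟫ • e (k : ℕ)‖ ^ 2 ∂μ)
      = (∫ u, ‖u‖ ^ 2 ∂μ - ∑ k ∈ range p, ∫ u, ⟪e k, u⟫ ^ 2 ∂μ)
          + ∑ k : Fin p, ∫ u, ⟪e k - φ k, u⟫ ^ 2 ∂μ := by
        rw [integral_congr_ae (.of_forall pointwise), integral_add (hμ.sub' (hsum _)) (hsum _),
          integral_sub hμ (hsum _), integral_finsetSum _ fun k _ => integrable_inner_sq hμ _,
          integral_finsetSum _ fun k _ => integrable_inner_sq hμ _,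
          Fin.sum_univ_eq_sum_range (fun k => ∫ u, ⟪e k, u⟫ ^ 2 ∂μ)]
    _ ≤ ∑' k : {k : ℕ // p ≤ k}, ∫ u, ⟪e (k : ℕ), u⟫ ^ 2 ∂μ + ε ^ 2 := by
        rw [← tail.tsum_eq]
        gcongr
        exact sum_integral_inner_sq_le_sq hμ _ fun k => norm_sub_rev (φ k) _ ▸ hφ k
    _ = _ := add_comm _ _

/-- If each encoder basis function `φ k` approximates the Hilbert basis vector `e k` to
accuracy `ε / (σ √p)`, where `σ² = ∫ ‖u‖² dμ`, then the squared statistical encoding error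
is at most `ε²` plus the encoder-independent lower bound `∑_{k>p} ∫ ⟪e k, u⟫² dμ`. -/
theorem statistical_encoding_error_bound_of_basis_approx
    {H : Type*} [NormedAddCommGroup H] [InnerProductSpace ℝ H] [CompleteSpace H]
    [MeasurableSpace H] [BorelSpace H]
    (e : HilbertBasis ℕ ℝ H)
    (μ : Measure H) [IsProbabilityMeasure μ]
    (hμ : Integrable (fun u => ‖u‖ ^ 2) μ)
    (hμpos : 0 < ∫ u, ‖u‖ ^ 2 ∂μ)
    (ε : ℝ) (hε : 0 < ε)
    (p : ℕ) (hp : 1 ≤ p) (φ : Fin p → H)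
    (hφ : ∀ k : Fin p,
      ‖φ k - e (k : ℕ)‖ ≤ ε / (Real.sqrt (∫ u, ‖u‖ ^ 2 ∂μ) * Real.sqrt p)) :
    (∫ u, ‖u - ∑ k : Fin p, ⟪φ k, u⟫ • e (k : ℕ)‖ ^ 2 ∂μ) ≤
      ε ^ 2 + ∑' k : {k : ℕ // p ≤ k}, ∫ u, ⟪e (k : ℕ), u⟫ ^ 2 ∂μ :=
  statistical_encoding_error_bound_of_basis_approx_general e μ hμ ε p φ hφ
end
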